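/- Let T > 0 and let a, b : [0,T) → ℝ be locally Lipschitz functions with a(t) ≤ b(t) for all t, satisfying a'(t) + b'(t) ≤ (b(t) - a(t))(1 + (3/2)(a(t) + b(t))) - 3 b(t)² for almost every t ∈ (0,T). If 1 + (3/2)(a(0) + b(0)) < 0, then 1 + (3/2)(a(t) + b(t)) < 0 for every t ∈ [0,T). -/

import Mathlib

/-!
Write `S = a + b`. As long as `1 + (3/2) S < 0` holds on `[0, s)`, the right-hand side
`(b - a)(1 + (3/2) S) - 3 b²` is `≤ 0` there (because `a ≤ b`), so `S' ≤ 0` almost everywhere on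
`(0, s)`. A locally Lipschitz function is absolutely continuous, hence the integral of its
derivative, so `S s ≤ S 0` and the strict sign condition also holds at `s`. Continuous induction
(look at the first time the condition fails) then propagates it to all of `[0, T)`.
-/

open MeasureTheory Set

theorem AbsolutelyContinuousOnInterval.le_of_ae_hasDerivAt_nonpos {f : ℝ → ℝ} {x y : ℝ}
    (hf : AbsolutelyContinuousOnInterval f x y) (hxy : x ≤ y)
    (hd : ∀ᵐ t, t ∈ Ioo x y → ∀ d, HasDerivAt f d t → d ≤ 0) :
    f y ≤ f x := by
  have hderiv : ∀ᵐ t ∂volume.restrict (Ioo x y), deriv f t ≤ 0 := by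
    rw [ae_restrict_iff' measurableSet_Ioo]
    filter_upwards [hf.ae_differentiableAt, hd] with t hdiff hd ht
    exact hd ht _ (hdiff (Ioo_subset_Icc_self.trans Icc_subset_uIcc ht)).hasDerivAt
  have hftc := hf.integral_deriv_eq_sub
  rw [intervalIntegral.integral_of_le hxy, integral_Ioc_eq_integral_Ioo] at hftc
  linarith [setIntegral_nonpos_of_ae_restrict hderiv]

theorem ContinuousOn.forall_Icc_neg_of_forall_Ico_neg {α : Type*}
    [ConditionallyCompleteLinearOrder α] [TopologicalSpace α] [OrderTopology α]
    {φ : α → ℝ} {a c : α} (hφ : ContinuousOn φ (Icc a c))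
    (h : ∀ s ∈ Icc a c, (∀ t ∈ Ico a s, φ t < 0) → φ s < 0) :
    ∀ s ∈ Icc a c, φ s < 0 := by
  by_contra! hbad
  set B := Icc a c ∩ φ ⁻¹' Ici 0
  have hB : IsClosed B := hφ.preimage_isClosed_of_isClosed isClosed_Icc isClosed_Ici
  have hBbdd : BddBelow B := ⟨a, fun t ht => ht.1.1⟩
  obtain ⟨s, hs, hφs⟩ := hbad
  have hmem : sInf B ∈ B := hB.csInf_mem ⟨s, hs, hφs⟩ hBbdd
  refine not_lt.2 hmem.2 (h _ hmem.1 fun t ht => ?_)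
  by_contra! hφt
  exact (csInf_le hBbdd ⟨⟨ht.1, ht.2.le.trans hmem.1.2⟩, hφt⟩).not_gt ht.2

theorem AbsolutelyContinuousOnInterval.add_le_of_ae_hasDerivAt_add_nonpos {f g : ℝ → ℝ}
    {x y : ℝ} (hf : AbsolutelyContinuousOnInterval f x y)
    (hg : AbsolutelyContinuousOnInterval g x y) (hxy : x ≤ y)
    (hd : ∀ᵐ t, t ∈ Ioo x y →
      ∀ df dg, HasDerivAt f df t → HasDerivAt g dg t → df + dg ≤ 0) :
    f y + g y ≤ f x + g x := by
  refine (hf.fun_add hg).le_of_ae_hasDerivAt_nonpos hxy ?_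
  filter_upwards [hd, hf.ae_differentiableAt, hg.ae_differentiableAt]
    with t hd hfdiff hgdiff ht d hfg
  have htI : t ∈ uIcc x y := Ioo_subset_Icc_self.trans Icc_subset_uIcc ht
  have hf' := (hfdiff htI).hasDerivAt
  have hg' := (hgdiff htI).hasDerivAt
  rw [hfg.unique (hf'.add hg')]
  exact hd ht _ _ hf' hg'

theorem sign_condition_invariant (T : ℝ) (a b : ℝ → ℝ)
    (ha : ∀ c : ℝ, c < T → ∃ L : NNReal, LipschitzOnWith L a (Set.Icc 0 c))
    (hb : ∀ c : ℝ, c < T → ∃ L : NNReal, LipschitzOnWith L b (Set.Icc 0 c))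
    (hab : ∀ t ∈ Set.Ico (0 : ℝ) T, a t ≤ b t)
    (hineq : ∀ᵐ t ∂(volume : Measure ℝ), t ∈ Set.Ioo (0 : ℝ) T →
      ∀ da db : ℝ, HasDerivAt a da t → HasDerivAt b db t →
        da + db ≤ (b t - a t) * (1 + (3 / 2) * (a t + b t)) - 3 * (b t) ^ 2)
    (h0 : 1 + (3 / 2) * (a 0 + b 0) < 0) :
    ∀ t ∈ Set.Ico (0 : ℝ) T, 1 + (3 / 2) * (a t + b t) < 0 := by
  rintro t₁ ⟨ht₁0, ht₁T⟩
  obtain ⟨La, hLa⟩ := ha t₁ ht₁T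
  obtain ⟨Lb, hLb⟩ := hb t₁ ht₁T
  refine ContinuousOn.forall_Icc_neg_of_forall_Ico_neg (φ := fun t => 1 + (3 / 2) * (a t + b t))
    (continuousOn_const.add (continuousOn_const.mul (hLa.continuousOn.add hLb.continuousOn)))
    (fun s hs hneg => ?_) t₁ ⟨ht₁0, le_rfl⟩
  have hsub : uIcc 0 s ⊆ Icc 0 t₁ := by
    rw [uIcc_of_le hs.1]; exact Icc_subset_Icc_right hs.2
  have hdecr : a s + b s ≤ a 0 + b 0 := by
    refine AbsolutelyContinuousOnInterval.add_le_of_ae_hasDerivAt_add_nonpos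
      (hLa.mono hsub).absolutelyContinuousOnInterval
      (hLb.mono hsub).absolutelyContinuousOnInterval hs.1 ?_
    filter_upwards [hineq] with t hineq_t ht da db hda hdb
    have htT : t ∈ Ioo 0 T := ⟨ht.1, ht.2.trans_le (hs.2.trans ht₁T.le)⟩
    have hbound := hineq_t htT _ _ hda hdb
    have hab_t : 0 ≤ b t - a t := sub_nonneg.2 (hab t ⟨ht.1.le, htT.2⟩)
    have hneg_t := hneg t ⟨ht.1.le, ht.2⟩
    linarith [mul_nonpos_of_nonneg_of_nonpos hab_t hneg_t.le, sq_nonneg (b t)]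
  linarith
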